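/- For every ε > 0 there exists a constant C > 0 such that for every real number a, Σ_{k∈ℕ} ⟨μ_k − a⟩^{−1} · ⟨μ_k⟩^{−ε} ≤ C, where μ_k = √(k(k+1)). -/
import Mathlib


open scoped ENNReal

/-- `μ_k = √(k(k+1))`, the square root of the `k`-th eigenvalue of `−Δ` on `S²`. -/
noncomputable def mu (k : ℕ) : ℝ := Real.sqrt (k * (k + 1))

/-- The Japanese bracket `⟨x⟩ = (1 + |x|²)^{1/2}`. -/
noncomputable def jb (x : ℝ) : ℝ := Real.sqrt (1 + x ^ 2)

lemma jb_one_le (x : ℝ) : 1 ≤ jb x := by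
  have h : Real.sqrt 1 ≤ Real.sqrt (1 + x ^ 2) :=
    Real.sqrt_le_sqrt (by nlinarith [sq_nonneg x])
  simpa [jb, Real.sqrt_one] using h

lemma jb_pos (x : ℝ) : 0 < jb x := lt_of_lt_of_le one_pos (jb_one_le x)

lemma jb_nonneg (x : ℝ) : 0 ≤ jb x := (jb_pos x).le

lemma jb_mono {x y : ℝ} (h : |x| ≤ |y|) : jb x ≤ jb y := by
  apply Real.sqrt_le_sqrt
  nlinarith [mul_self_le_mul_self (abs_nonneg x) h, abs_mul_abs_self x, abs_mul_abs_self y]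

lemma abs_le_jb (x : ℝ) : |x| ≤ jb x := by
  have h : Real.sqrt (x ^ 2) ≤ Real.sqrt (1 + x ^ 2) := Real.sqrt_le_sqrt (by linarith)
  simpa [jb, Real.sqrt_sq_eq_abs] using h

lemma jb_peetre {x y : ℝ} (h : |x - y| ≤ 3 / 2) : jb x ≤ 4 * jb y := by
  have h2 : (x - y) ^ 2 ≤ (3 / 2 : ℝ) ^ 2 :=
    sq_le_sq' (by linarith [(abs_le.mp h).1]) (abs_le.mp h).2
  have h3 : 1 + x ^ 2 ≤ 16 * (1 + y ^ 2) := by nlinarith [sq_nonneg (x - 2 * y)]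
  have h4 : jb x ≤ Real.sqrt (16 * (1 + y ^ 2)) := Real.sqrt_le_sqrt h3
  have h5 : Real.sqrt (16 * (1 + y ^ 2)) = 4 * jb y := by
    rw [Real.sqrt_mul (by norm_num : (0:ℝ) ≤ 16), jb,
      show (16:ℝ) = 4 ^ 2 by norm_num, Real.sqrt_sq (by norm_num : (0:ℝ) ≤ 4)]
  linarith

lemma mu_nonneg (k : ℕ) : 0 ≤ mu k := Real.sqrt_nonneg _

lemma le_mu (k : ℕ) : (k : ℝ) ≤ mu k := by
  apply Real.le_sqrt_of_sq_le
  nlinarith [Nat.cast_nonneg (α := ℝ) k]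

lemma mu_le (k : ℕ) : mu k ≤ (k : ℝ) + 1 := by
  have h : Real.sqrt ((k : ℝ) * (k + 1)) ≤ Real.sqrt (((k : ℝ) + 1) ^ 2) :=
    Real.sqrt_le_sqrt (by nlinarith [Nat.cast_nonneg (α := ℝ) k])
  rw [Real.sqrt_sq (by positivity)] at h
  simpa [mu] using h

/-- Uniform summability in `k`: for every `ε > 0` there is `C > 0` such that for every
`a ∈ ℝ`, `Σ_{k∈ℕ} ⟨μ_k − a⟩^{−1} ⟨μ_k⟩^{−ε} ≤ C`. -/
theorem sum_bracket_mu_bound (ε : ℝ) (hε : 0 < ε) :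
    ∃ C : ℝ, 0 < C ∧ ∀ a : ℝ,
      ∑' k : ℕ, ENNReal.ofReal ((jb (mu k - a))⁻¹ * jb (mu k) ^ (-ε)) ≤
        ENNReal.ofReal C := by
  set p : ℝ := 1 + ε with hp_def
  have hp : 1 < p := by simp [hp_def]; linarith
  have hp0 : 0 < p := by linarith
  -- the dominating sequence
  set g : ℕ → ℝ := fun m => jb m ^ (-p) with hg_def
  have hg_nonneg : ∀ m, 0 ≤ g m := fun m => Real.rpow_nonneg (jb_nonneg _) _
  have hg_summable : Summable g := by
    rw [← summable_nat_add_iff 1]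
    have h1 : Summable (fun m : ℕ => ((m : ℝ) ^ p)⁻¹) := Real.summable_nat_rpow_inv.mpr hp
    have h2 : Summable (fun m : ℕ => (((m + 1 : ℕ) : ℝ) ^ p)⁻¹) :=
      (summable_nat_add_iff 1).mpr h1
    apply Summable.of_nonneg_of_le (fun m => hg_nonneg _) _ h2
    intro m
    have hm : (0:ℝ) < ((m + 1 : ℕ) : ℝ) := by positivity
    have hle : ((m + 1 : ℕ) : ℝ) ≤ jb ((m + 1 : ℕ) : ℝ) :=
      le_trans (le_abs_self _) (abs_le_jb _)
    have := Real.rpow_le_rpow_of_nonpos hm hle (neg_nonpos.mpr hp0.le)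
    rw [Real.rpow_neg hm.le] at this
    simpa [hg_def] using this
  set S₀ : ℝ := ∑' m, g m with hS0_def
  have hS0_nonneg : 0 ≤ S₀ := tsum_nonneg hg_nonneg
  have h4p : (0:ℝ) < (4:ℝ) ^ p := Real.rpow_pos_of_pos (by norm_num) _
  refine ⟨(2 * (4:ℝ) ^ p + 1) * S₀ + 1, by positivity, ?_⟩
  intro a
  set n : ℤ := round a with hn_def
  set H : ℕ → ℝ≥0∞ := fun m => ENNReal.ofReal (g m) with hH_def
  set S : ℝ≥0∞ := ∑' m, H m with hS_def
  have hS_eq : S = ENNReal.ofReal S₀ := by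
    rw [hS_def, hS0_def, ENNReal.ofReal_tsum_of_nonneg hg_nonneg hg_summable]
  -- pointwise comparison
  have pointwise : ∀ k : ℕ, (jb (mu k - a))⁻¹ * jb (mu k) ^ (-ε) ≤
      jb (mu k - a) ^ (-p) + jb (mu k) ^ (-p) := by
    intro k
    set X := jb (mu k - a) with hX_def
    set Y := jb (mu k) with hY_def
    have hX : 0 < X := jb_pos _
    have hY : 0 < Y := jb_pos _
    have hsplit : ∀ Z : ℝ, 0 < Z → Z⁻¹ * Z ^ (-ε) = Z ^ (-p) := by
      intro Z hZ
      rw [show -p = -1 + -ε by simp [hp_def]; ring, Real.rpow_add hZ, Real.rpow_neg_one]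
    rcases le_total X Y with h | h
    · have h1 : Y ^ (-ε) ≤ X ^ (-ε) :=
        Real.rpow_le_rpow_of_nonpos hX h (neg_nonpos.mpr hε.le)
      have h2 : X⁻¹ * Y ^ (-ε) ≤ X⁻¹ * X ^ (-ε) :=
        mul_le_mul_of_nonneg_left h1 (inv_nonneg.mpr hX.le)
      rw [hsplit X hX] at h2
      exact h2.trans (le_add_of_nonneg_right (Real.rpow_nonneg hY.le _))
    · have h1 : X⁻¹ ≤ Y⁻¹ := by
        apply inv_anti₀ hY h
      have h2 : X⁻¹ * Y ^ (-ε) ≤ Y⁻¹ * Y ^ (-ε) :=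
        mul_le_mul_of_nonneg_right h1 (Real.rpow_nonneg hY.le _)
      rw [hsplit Y hY] at h2
      exact h2.trans (le_add_of_nonneg_left (Real.rpow_nonneg hX.le _))
  -- bound the translated part by a shifted copy of g
  have key2 : ∀ k : ℕ, jb (mu k - a) ^ (-p) ≤ (4:ℝ) ^ p * g (((k:ℤ) - n).natAbs) := by
    intro k
    have hcast : ((((k:ℤ) - n).natAbs : ℕ) : ℝ) = |((k:ℤ) - n : ℤ)| := by
      rw [Nat.cast_natAbs]
    have hjb_eq : jb ((((k:ℤ) - n).natAbs : ℕ) : ℝ) = jb ((k : ℝ) - (n : ℝ)) := by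
      rw [hcast]
      simp only [jb]
      rw [Int.cast_abs, sq_abs]
      push_cast
      ring_nf
    have hdist : |((k : ℝ) - (n : ℝ)) - (mu k - a)| ≤ 3 / 2 := by
      have h1 : |(k : ℝ) - mu k| ≤ 1 := by
        rw [abs_le]; constructor <;> nlinarith [le_mu k, mu_le k]
      have h2 : |a - (n : ℝ)| ≤ 1 / 2 := by
        simpa [hn_def] using abs_sub_round a
      calc |((k : ℝ) - (n : ℝ)) - (mu k - a)| = |((k : ℝ) - mu k) + (a - (n : ℝ))| := by
            ring_nf
        _ ≤ |(k : ℝ) - mu k| + |a - (n : ℝ)| := abs_add_le _ _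
        _ ≤ 3 / 2 := by linarith
    have hpeetre : jb ((((k:ℤ) - n).natAbs : ℕ) : ℝ) ≤ 4 * jb (mu k - a) := by
      rw [hjb_eq]; exact jb_peetre hdist
    have hq : (0:ℝ) < jb ((((k:ℤ) - n).natAbs : ℕ) : ℝ) / 4 := by
      have := jb_pos ((((k:ℤ) - n).natAbs : ℕ) : ℝ); linarith
    have h3 : jb ((((k:ℤ) - n).natAbs : ℕ) : ℝ) / 4 ≤ jb (mu k - a) := by linarith
    have h4 := Real.rpow_le_rpow_of_nonpos hq h3 (neg_nonpos.mpr hp0.le)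
    calc jb (mu k - a) ^ (-p)
        ≤ (jb ((((k:ℤ) - n).natAbs : ℕ) : ℝ) / 4) ^ (-p) := h4
      _ = (4:ℝ) ^ p * g (((k:ℤ) - n).natAbs) := by
          rw [Real.div_rpow (jb_nonneg _) (by norm_num : (0:ℝ) ≤ 4),
            Real.rpow_neg (by norm_num : (0:ℝ) ≤ 4), div_eq_mul_inv, inv_inv, mul_comm]
  have key1 : ∀ k : ℕ, jb (mu k) ^ (-p) ≤ g k := by
    intro k
    apply Real.rpow_le_rpow_of_nonpos (jb_pos _) _ (neg_nonpos.mpr hp0.le)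
    apply jb_mono
    rw [abs_of_nonneg (Nat.cast_nonneg k), abs_of_nonneg (mu_nonneg k)]
    exact le_mu k
  -- the shifted sum is at most 2 S
  have hshift : ∑' k : ℕ, H (((k:ℤ) - n).natAbs) ≤ 2 * S := by
    set s : Set ℕ := {k | n ≤ (k:ℤ)} with hs_def
    have hsplit := (Summable.tsum_add_tsum_compl (f := fun k : ℕ => H (((k:ℤ) - n).natAbs)) (s := s)
      ENNReal.summable ENNReal.summable).symm
    rw [hsplit, two_mul]
    apply add_le_add
    · have hinj : Function.Injective (fun k : s => ((k:ℤ) - n).toNat) := by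
        intro k₁ k₂ h
        have h1 : n ≤ ((k₁ : ℕ) : ℤ) := k₁.2
        have h2 : n ≤ ((k₂ : ℕ) : ℤ) := k₂.2
        apply Subtype.ext
        simp only at h
        omega
      calc ∑' (k : s), H ((((k : ℕ):ℤ) - n).natAbs)
          = ∑' (k : s), H (((k:ℤ) - n).toNat) := by
            apply tsum_congr; intro k
            have h1 : n ≤ ((k : ℕ) : ℤ) := k.2
            congr 1
            omega
        _ ≤ ∑' m, H m := ENNReal.tsum_comp_le_tsum_of_injective hinj H
    · have hinj : Function.Injective (fun k : ↑sᶜ => (n - (k:ℤ)).toNat) := by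
        intro k₁ k₂ h
        have h1 : ¬ (n ≤ ((k₁ : ℕ) : ℤ)) := k₁.2
        have h2 : ¬ (n ≤ ((k₂ : ℕ) : ℤ)) := k₂.2
        apply Subtype.ext
        simp only at h
        omega
      calc ∑' (k : ↑sᶜ), H ((((k : ℕ):ℤ) - n).natAbs)
          = ∑' (k : ↑sᶜ), H ((n - (k:ℤ)).toNat) := by
            apply tsum_congr; intro k
            have h1 : ¬ (n ≤ ((k : ℕ) : ℤ)) := k.2
            congr 1
            omega
        _ ≤ ∑' m, H m := ENNReal.tsum_comp_le_tsum_of_injective hinj H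
  -- assemble
  have hrw : ∀ k : ℕ, ENNReal.ofReal (jb (mu k - a) ^ (-p) + jb (mu k) ^ (-p)) =
      ENNReal.ofReal (jb (mu k - a) ^ (-p)) + ENNReal.ofReal (jb (mu k) ^ (-p)) := by
    intro k
    exact ENNReal.ofReal_add (Real.rpow_nonneg (jb_nonneg _) _) (Real.rpow_nonneg (jb_nonneg _) _)
  calc ∑' k : ℕ, ENNReal.ofReal ((jb (mu k - a))⁻¹ * jb (mu k) ^ (-ε))
      ≤ ∑' k : ℕ, ENNReal.ofReal (jb (mu k - a) ^ (-p) + jb (mu k) ^ (-p)) :=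
        ENNReal.tsum_le_tsum (fun k => ENNReal.ofReal_le_ofReal (pointwise k))
    _ = ∑' k : ℕ, (ENNReal.ofReal (jb (mu k - a) ^ (-p)) +
          ENNReal.ofReal (jb (mu k) ^ (-p))) := tsum_congr hrw
    _ = (∑' k : ℕ, ENNReal.ofReal (jb (mu k - a) ^ (-p))) +
          ∑' k : ℕ, ENNReal.ofReal (jb (mu k) ^ (-p)) := ENNReal.tsum_add
    _ ≤ (ENNReal.ofReal ((4:ℝ) ^ p) * (2 * S)) + S := by
        apply add_le_add
        · calc ∑' k : ℕ, ENNReal.ofReal (jb (mu k - a) ^ (-p))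
              ≤ ∑' k : ℕ, ENNReal.ofReal ((4:ℝ) ^ p * g (((k:ℤ) - n).natAbs)) :=
                ENNReal.tsum_le_tsum (fun k => ENNReal.ofReal_le_ofReal (key2 k))
            _ = ∑' k : ℕ, ENNReal.ofReal ((4:ℝ) ^ p) * H (((k:ℤ) - n).natAbs) := by
                apply tsum_congr; intro k
                rw [ENNReal.ofReal_mul h4p.le]
            _ = ENNReal.ofReal ((4:ℝ) ^ p) * ∑' k : ℕ, H (((k:ℤ) - n).natAbs) :=
                ENNReal.tsum_mul_left
            _ ≤ ENNReal.ofReal ((4:ℝ) ^ p) * (2 * S) := by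
                exact mul_le_mul_right hshift _
        · exact ENNReal.tsum_le_tsum (fun k => ENNReal.ofReal_le_ofReal (key1 k))
    _ ≤ ENNReal.ofReal ((2 * (4:ℝ) ^ p + 1) * S₀ + 1) := by
        rw [hS_eq]
        calc ENNReal.ofReal ((4:ℝ) ^ p) * (2 * ENNReal.ofReal S₀) + ENNReal.ofReal S₀
            = ENNReal.ofReal ((4:ℝ) ^ p * (2 * S₀)) + ENNReal.ofReal S₀ := by
              rw [ENNReal.ofReal_mul h4p.le, ENNReal.ofReal_mul (by norm_num : (0:ℝ) ≤ 2),
                ENNReal.ofReal_ofNat]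
          _ = ENNReal.ofReal ((4:ℝ) ^ p * (2 * S₀) + S₀) :=
              (ENNReal.ofReal_add (by positivity) hS0_nonneg).symm
          _ ≤ ENNReal.ofReal ((2 * (4:ℝ) ^ p + 1) * S₀ + 1) := by
              apply ENNReal.ofReal_le_ofReal
              nlinarith
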